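/- Assume the n×n matrix (a^{ij}(p)) is invertible with inverse (a_{ij}(p)) and set a_i = ∑_s a_{is}·a^s. Then the matrix (g^{ij}(p)) = ((m−1)a^{ij} − (m−2)a^i a^j) is invertible and its inverse is given by g_{ij} = (1/(m−1))·a_{ij} + ((m−2)/(m−1))·a_i·a_j, i.e. ∑_s g_{is}·g^{sj} = δ_i^j for all i, j. -/

import Mathlib

open Finset

noncomputable section

/-- `A(p) = ∑ a^{i₁…i_m} p_{i₁}⋯p_{i_m}`, where `m = M + 3 ≥ 3`. -/
def Afun {n M : ℕ} (a : (Fin (M + 3) → Fin n) → ℝ) (p : Fin n → ℝ) : ℝ :=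
  ∑ ι : Fin (M + 3) → Fin n, a ι * ∏ t, p (ι t)

/-- `K(p) = A(p)^{1/m}`. -/
def Kfun {n M : ℕ} (a : (Fin (M + 3) → Fin n) → ℝ) (p : Fin n → ℝ) : ℝ :=
  Afun a p ^ ((1 : ℝ) / (M + 3))

/-- `a^i = (∑ a^{i i₂…i_m} p_{i₂}⋯p_{i_m}) / K^{m-1}`. -/
def aU1 {n M : ℕ} (a : (Fin (M + 3) → Fin n) → ℝ) (i : Fin n) (p : Fin n → ℝ) : ℝ :=
  (∑ ι : Fin (M + 2) → Fin n, a (Fin.cons i ι) * ∏ t, p (ι t)) / Kfun a p ^ (M + 2)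

/-- `a^{ij} = (∑ a^{i j i₃…i_m} p_{i₃}⋯p_{i_m}) / K^{m-2}`. -/
def aU2 {n M : ℕ} (a : (Fin (M + 3) → Fin n) → ℝ) (i j : Fin n) (p : Fin n → ℝ) : ℝ :=
  (∑ ι : Fin (M + 1) → Fin n, a (Fin.cons i (Fin.cons j ι)) * ∏ t, p (ι t)) / Kfun a p ^ (M + 1)

/-- `a^{ijk} = (∑ a^{i j k i₄…i_m} p_{i₄}⋯p_{i_m}) / K^{m-3}`. -/
def aU3 {n M : ℕ} (a : (Fin (M + 3) → Fin n) → ℝ) (i j k : Fin n) (p : Fin n → ℝ) : ℝ :=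
  (∑ ι : Fin M → Fin n, a (Fin.cons i (Fin.cons j (Fin.cons k ι))) * ∏ t, p (ι t)) / Kfun a p ^ M

/-- Partial derivative `∂f/∂p_k` of a function of `p`. -/
def pd {n : ℕ} (f : (Fin n → ℝ) → ℝ) (k : Fin n) (p : Fin n → ℝ) : ℝ :=
  deriv (fun t => f (Function.update p k t)) (p k)

/-- Fundamental metrical d-tensor `g^{ij} = (1/2) ∂²(K²)/∂p_i∂p_j`. -/
def gU {n M : ℕ} (a : (Fin (M + 3) → Fin n) → ℝ) (i j : Fin n) (p : Fin n → ℝ) : ℝ :=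
  (1 / 2 : ℝ) * pd (fun q => pd (fun r => Kfun a r ^ 2) j q) i p

/-- Angular metrical d-tensor `h^{ij} = K ∂²K/∂p_i∂p_j`. -/
def hU {n M : ℕ} (a : (Fin (M + 3) → Fin n) → ℝ) (i j : Fin n) (p : Fin n → ℝ) : ℝ :=
  Kfun a p * pd (fun q => pd (Kfun a) j q) i p

/-- v-torsion d-tensor `C^{ijk} = -(1/2) ∂g^{ij}/∂p_k`. -/
def CU {n M : ℕ} (a : (Fin (M + 3) → Fin n) → ℝ) (i j k : Fin n) (p : Fin n → ℝ) : ℝ :=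
  -(1 / 2 : ℝ) * pd (gU a i j) k p

/-- Symmetry of `a` in all of its `m` indices. -/
def aSym {n M : ℕ} (a : (Fin (M + 3) → Fin n) → ℝ) : Prop :=
  ∀ (σ : Equiv.Perm (Fin (M + 3))) (ι : Fin (M + 3) → Fin n), a (ι ∘ σ) = a ι

/-- `a_i = ∑_s a_{is} a^s`, where `aLow` is the inverse matrix of `(a^{ij})`. -/
def aL {n M : ℕ} (a : (Fin (M + 3) → Fin n) → ℝ) (aLow : Matrix (Fin n) (Fin n) ℝ)
    (p : Fin n → ℝ) (i : Fin n) : ℝ :=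
  ∑ s, aLow i s * aU1 a s p

/-- `a_i^{jk} = ∑_s a_{is} a^{sjk}`. -/
def aL3 {n M : ℕ} (a : (Fin (M + 3) → Fin n) → ℝ) (aLow : Matrix (Fin n) (Fin n) ℝ)
    (p : Fin n → ℝ) (i j k : Fin n) : ℝ :=
  ∑ s, aLow i s * aU3 a s j k p

/-- `g_{ij} = (1/(m-1)) a_{ij} + ((m-2)/(m-1)) a_i a_j`, the inverse of `g^{ij}`. -/
def gL {n M : ℕ} (a : (Fin (M + 3) → Fin n) → ℝ) (aLow : Matrix (Fin n) (Fin n) ℝ)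
    (p : Fin n → ℝ) (i j : Fin n) : ℝ :=
  (1 / (M + 2 : ℝ)) * aLow i j + ((M + 1 : ℝ) / (M + 2)) * aL a aLow p i * aL a aLow p j

/-- v-derivation components `C_i^{jk} = ∑_s g_{is} C^{sjk}`. -/
def CL {n M : ℕ} (a : (Fin (M + 3) → Fin n) → ℝ) (aLow : Matrix (Fin n) (Fin n) ℝ)
    (p : Fin n → ℝ) (i j k : Fin n) : ℝ :=
  ∑ s, gL a aLow p i s * CU a s j k p

/-- v-curvature d-tensor `S^{hijk} = ∑_r (C_r^{ij} C^{rhk} - C_r^{ik} C^{rhj})`. -/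
def Scurv {n M : ℕ} (a : (Fin (M + 3) → Fin n) → ℝ) (aLow : Matrix (Fin n) (Fin n) ℝ)
    (p : Fin n → ℝ) (h i j k : Fin n) : ℝ :=
  ∑ r, (CL a aLow p r i j * CU a r h k p - CL a aLow p r i k * CU a r h j p)

/-- `U^{hijk} = ∑_r (a_r^{ij} a^{rhk} - a_r^{ik} a^{rhj})`. -/
def Ufun {n M : ℕ} (a : (Fin (M + 3) → Fin n) → ℝ) (aLow : Matrix (Fin n) (Fin n) ℝ)
    (p : Fin n → ℝ) (h i j k : Fin n) : ℝ :=
  ∑ r, (aL3 a aLow p r i j * aU3 a r h k p - aL3 a aLow p r i k * aU3 a r h j p)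

/-!
Write `B = (a^{ij})`, `v = (a^i)` and `L = B⁻¹`. Euler's identity for the homogeneous forms gives
`B p = K v` and `v · p = K`, hence `L v = p / K` and `vᵀ L v = 1`. With this normalisation,
`g^{ij} = (m-1) B - (m-2) v vᵀ` is a rank-one update of `(m-1) B` whose inverse is given by the
Sherman–Morrison formula, which is exactly `g_{ij}`.
-/

open Matrix

namespace Matrix

variable {ι K : Type*} [Fintype ι] [DecidableEq ι] [Field K]

theorem dotProduct_mulVec_eq_one_of_mulVec_eq_smul {B L : Matrix ι ι K} (hLB : L * B = 1)
    {p v : ι → K} {k : K} (hk : k ≠ 0) (hBp : B *ᵥ p = k • v) (hvp : v ⬝ᵥ p = k) :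
    v ⬝ᵥ (L *ᵥ v) = 1 := by
  have hLv : L *ᵥ v = k⁻¹ • p := by
    rw [eq_inv_smul_iff₀ hk, ← mulVec_smul, ← hBp, mulVec_mulVec, hLB, one_mulVec]
  rw [hLv, dotProduct_smul, hvp, smul_eq_mul, inv_mul_cancel₀ hk]

theorem smul_add_vecMulVec_mul_smul_sub_vecMulVec {B L : Matrix ι ι K} (hB : Bᵀ = B)
    (hLB : L * B = 1) {v : ι → K} (hv : v ⬝ᵥ (L *ᵥ v) = 1) {α β : K} (hα : α ≠ 0)
    (hαβ : α = β + 1) :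
    (α⁻¹ • L + (β / α) • vecMulVec (L *ᵥ v) (L *ᵥ v)) * (α • B - β • vecMulVec v v) = 1 := by
  have hBL : B * L = 1 := mul_eq_one_comm.mp hLB
  have hwB : (L *ᵥ v) ᵥ* B = v := by
    rw [← vecMul_transpose, vecMul_vecMul, ← hB, ← transpose_mul, hBL, transpose_one, vecMul_one]
  have hα' : α⁻¹ * α = 1 := inv_mul_cancel₀ hα
  have hcoeff : β / α * α - (α⁻¹ * β + β / α * β) = 0 := by
    field_simp
    rw [hαβ]
    ring
  rw [add_mul, mul_sub, mul_sub, smul_mul_smul_comm, smul_mul_smul_comm, smul_mul_smul_comm,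
    smul_mul_smul_comm, hLB, mul_vecMulVec, vecMulVec_mul, hwB, vecMulVec_mul_vecMulVec,
    dotProduct_comm, hv, one_smul]
  linear_combination (norm := module) hα' • (1 : Matrix ι ι K) + hcoeff • vecMulVec (L *ᵥ v) v

end Matrix

theorem Fin.sum_sum_cons_mul_prod {R : Type*} [CommSemiring R] {n k : ℕ}
    (f : (Fin (k + 1) → Fin n) → R) (p : Fin n → R) :
    ∑ j, (∑ κ : Fin k → Fin n, f (Fin.cons j κ) * ∏ t, p (κ t)) * p j =
      ∑ ι : Fin (k + 1) → Fin n, f ι * ∏ t, p (ι t) := by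
  rw [← (Fin.consEquiv fun _ => Fin n).sum_comp, Fintype.sum_prod_type]
  refine Finset.sum_congr rfl fun j _ => ?_
  rw [Finset.sum_mul]
  refine Finset.sum_congr rfl fun κ _ => ?_
  change _ = f (Fin.cons j κ) * ∏ t, p ((Fin.cons j κ : Fin (k + 1) → Fin n) t)
  rw [Fin.prod_univ_succ]
  simp only [Fin.cons_zero, Fin.cons_succ]
  ring

section Cartan

variable {n M : ℕ} {a : (Fin (M + 3) → Fin n) → ℝ} {p : Fin n → ℝ}

theorem aSym.cons_cons_comm (hsym : aSym a) (i j : Fin n) (ι : Fin (M + 1) → Fin n) :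
    a (Fin.cons i (Fin.cons j ι)) = a (Fin.cons j (Fin.cons i ι)) := by
  rw [← hsym (Equiv.swap 0 1) (Fin.cons j (Fin.cons i ι))]
  congr 1
  funext t
  refine Fin.cases ?_ (fun t => Fin.cases ?_ (fun t => ?_) t) t
  · simp
  · simp
  · rw [Function.comp_apply, Equiv.swap_apply_of_ne_of_ne (Fin.succ_ne_zero _)
      (Fin.succ_succ_ne_one _)]
    simp only [Fin.cons_succ]

theorem aU2_comm (hsym : aSym a) (i j : Fin n) : aU2 a i j p = aU2 a j i p := by
  simp only [aU2, hsym.cons_cons_comm i j]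

theorem Kfun_pos (hA : 0 < Afun a p) : 0 < Kfun a p :=
  Real.rpow_pos_of_pos hA _

theorem Kfun_pow (hA : 0 < Afun a p) : Kfun a p ^ (M + 3) = Afun a p := by
  rw [Kfun, ← Real.rpow_natCast, ← Real.rpow_mul hA.le]
  push_cast
  rw [one_div_mul_cancel (by positivity), Real.rpow_one]

theorem mulVec_aU2 (hA : 0 < Afun a p) :
    (of fun i j => aU2 a i j p) *ᵥ p = Kfun a p • fun i => aU1 a i p := by
  have hK := Kfun_pos hA
  ext i
  simp only [mulVec, dotProduct, of_apply, Pi.smul_apply, smul_eq_mul, aU2, aU1,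
    div_mul_eq_mul_div, ← Finset.sum_div]
  rw [Fin.sum_sum_cons_mul_prod (fun ι => a (Fin.cons i ι))]
  field_simp
  ring

theorem dotProduct_aU1 (hA : 0 < Afun a p) : (fun i => aU1 a i p) ⬝ᵥ p = Kfun a p := by
  have hK := Kfun_pos hA
  simp only [dotProduct, aU1, div_mul_eq_mul_div, ← Finset.sum_div]
  rw [Fin.sum_sum_cons_mul_prod a, ← Afun, ← Kfun_pow hA]
  field_simp
  ring

end Cartan

theorem stmt_4_general {n M : ℕ} (a : (Fin (M + 3) → Fin n) → ℝ)
    (hsym : aSym a) (p : Fin n → ℝ) (hA : 0 < Afun a p)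
    (aLow : Matrix (Fin n) (Fin n) ℝ)
    (hInv₂ : aLow * (Matrix.of fun i j => aU2 a i j p) = 1) :
    (∀ i j, ∑ s, gL a aLow p i s *
        ((M + 2 : ℝ) * aU2 a s j p - (M + 1 : ℝ) * (aU1 a s p * aU1 a j p)) =
        if i = j then (1 : ℝ) else 0) ∧
    (∀ i j, ∑ s,
        ((M + 2 : ℝ) * aU2 a i s p - (M + 1 : ℝ) * (aU1 a i p * aU1 a s p)) *
          gL a aLow p s j =
        if i = j then (1 : ℝ) else 0) := by
  set v : Fin n → ℝ := fun i => aU1 a i p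
  have hB : (of fun i j => aU2 a i j p)ᵀ = of fun i j => aU2 a i j p := by
    ext i j
    exact aU2_comm hsym j i
  have hv : v ⬝ᵥ (aLow *ᵥ v) = 1 :=
    dotProduct_mulVec_eq_one_of_mulVec_eq_smul hInv₂ (Kfun_pos hA).ne' (mulVec_aU2 hA)
      (dotProduct_aU1 hA)
  have hgL : of (gL a aLow p) =
      ((M + 2 : ℝ))⁻¹ • aLow + ((M + 1 : ℝ) / (M + 2)) • vecMulVec (aLow *ᵥ v) (aLow *ᵥ v) := by
    ext i j
    simp only [gL, aL, of_apply, Matrix.add_apply, Matrix.smul_apply, vecMulVec_apply,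
      mulVec, dotProduct, smul_eq_mul, v]
    ring
  have hgU : (of fun i j => (M + 2 : ℝ) * aU2 a i j p - (M + 1 : ℝ) * (aU1 a i p * aU1 a j p)) =
      (M + 2 : ℝ) • (of fun i j => aU2 a i j p) - (M + 1 : ℝ) • vecMulVec v v := by
    ext i j
    simp [v, vecMulVec_apply]
  have hgLgU := smul_add_vecMulVec_mul_smul_sub_vecMulVec hB hInv₂ hv (by positivity)
    (by ring : (M + 2 : ℝ) = M + 1 + 1)
  rw [← hgL, ← hgU] at hgLgU
  have hgUgL := mul_eq_one_comm.mp hgLgU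
  refine ⟨fun i j => ?_, fun i j => ?_⟩
  · simpa [mul_apply, one_apply] using congrFun₂ hgLgU i j
  · simpa [mul_apply, one_apply] using congrFun₂ hgUgL i j

/-- the matrix `g^{ij} = (m-1)a^{ij} - (m-2)a^i a^j` is invertible with
inverse `g_{ij} = (1/(m-1)) a_{ij} + ((m-2)/(m-1)) a_i a_j`, i.e.
`∑_s g_{is} g^{sj} = δ_i^j` (and also `∑_s g^{is} g_{sj} = δ_i^j`). -/
theorem stmt_4 {n M : ℕ} (hn : 4 ≤ n) (a : (Fin (M + 3) → Fin n) → ℝ)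
    (hsym : aSym a) (p : Fin n → ℝ) (hA : 0 < Afun a p)
    (aLow : Matrix (Fin n) (Fin n) ℝ)
    (hInv₁ : (Matrix.of fun i j => aU2 a i j p) * aLow = 1)
    (hInv₂ : aLow * (Matrix.of fun i j => aU2 a i j p) = 1) :
    (∀ i j, ∑ s, gL a aLow p i s *
        ((M + 2 : ℝ) * aU2 a s j p - (M + 1 : ℝ) * (aU1 a s p * aU1 a j p)) =
        if i = j then (1 : ℝ) else 0) ∧
    (∀ i j, ∑ s,
        ((M + 2 : ℝ) * aU2 a i s p - (M + 1 : ℝ) * (aU1 a i p * aU1 a s p)) *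
          gL a aLow p s j =
        if i = j then (1 : ℝ) else 0) :=
  stmt_4_general a hsym p hA aLow hInv₂
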